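/- arXiv:1909.03712 — 2 statements merged into one kernel-verified Lean document; each statement's English description precedes it below -/
import Mathlib

section
/- Let β > 0, k ∈ {1,…,N−1}, and let d ∈ ℝ^N with entries sorted in nondecreasing order d_1 ≤ d_2 ≤ … ≤ d_N. Let α > 0 and let s* be the unique minimizer of ‖s + d/(4αβ)‖₂² over the simplex { s ∈ ℝ^N : Σ_j s_j = 1, s_j ≥ 0 }, written as s*_j = (−d_j/(4αβ) + φ)_+ with φ = 1/k + (1/(4kαβ)) Σ_{j=1}^k d_j. If s*_k > 0 and s*_{k+1} = 0, then α satisfies (1/(2β)) ( (k/2) d_k − (1/2) Σ_{j=1}^k d_j ) < α ≤ (1/(2β)) ( (k/2) d_{k+1} − (1/2) Σ_{j=1}^k d_j ). -/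
/-!
With `c = 4αβ`, the support condition of the thresholded form says `0 < -d_j/c + φ` exactly when
`d_j < cφ`, and the formula for `φ` gives `cφ = (c + ∑_{j ≤ k} d_j) / k`. So `s*_k > 0` and
`s*_{k+1} = 0` read `k d_k < 4αβ + ∑_{j ≤ k} d_j ≤ k d_{k+1}`, which is the claimed interval for `α`.
-/

open Finset

section Threshold

variable {c x φ : ℝ}

lemma pos_max_neg_div_add_zero_iff (hc : 0 < c) : 0 < max (-x / c + φ) 0 ↔ x < c * φ := by
  rw [lt_max_iff, lt_self_iff_false, or_false, show -x / c + φ = (c * φ - x) / c by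
    field_simp; ring, div_pos_iff_of_pos_right hc, sub_pos]

lemma max_neg_div_add_zero_eq_zero_iff (hc : 0 < c) : max (-x / c + φ) 0 = 0 ↔ c * φ ≤ x := by
  rw [max_eq_right_iff, ← not_lt, ← not_lt, ← pos_max_neg_div_add_zero_iff hc, lt_max_iff,
    lt_self_iff_false, or_false]

end Threshold

/-- Let `β > 0`, `k ∈ {1,…,N-1}`, and `d ∈ ℝ^N` sorted in
nondecreasing order. Let `α > 0` and let `s*` be the unique minimizer of
`‖s + d/(4αβ)‖₂²` over the simplex, written as `s* j = (-(d j)/(4αβ) + φ)₊`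
with `φ = 1/k + (1/(4 k α β)) ∑_{j≤k} d j` (1-based indexing; here `d ⟨k-1⟩` is
the `k`-th smallest entry). If `s*_k > 0` and `s*_{k+1} = 0`, then
`(1/(2β)) ((k/2) d_k - (1/2) ∑_{j=1}^k d_j) < α ≤ (1/(2β)) ((k/2) d_{k+1} - (1/2) ∑_{j=1}^k d_j)`. -/
theorem alpha_interval_from_neighbour_number
    (N k : ℕ) (hk : 1 ≤ k) (hkN : k < N)
    (β : ℝ) (hβ : 0 < β) (α : ℝ) (hα : 0 < α)
    (d : Fin N → ℝ)
    (s : Fin N → ℝ) (φ : ℝ)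
    (hform : ∀ j, s j = max (-(d j) / (4 * α * β) + φ) 0)
    (hφ : φ = 1 / (k : ℝ) +
      (1 / (4 * (k : ℝ) * α * β)) *
        ∑ j ∈ Finset.univ.filter (fun j : Fin N => (j : ℕ) < k), d j)
    (hsk : 0 < s ⟨k - 1, by omega⟩)
    (hsk1 : s ⟨k, hkN⟩ = 0) :
    (1 / (2 * β)) * (((k : ℝ) / 2) * d ⟨k - 1, by omega⟩ -
        (1 / 2) * ∑ j ∈ Finset.univ.filter (fun j : Fin N => (j : ℕ) < k), d j)
      < α ∧
    α ≤ (1 / (2 * β)) * (((k : ℝ) / 2) * d ⟨k, hkN⟩ -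
        (1 / 2) * ∑ j ∈ Finset.univ.filter (fun j : Fin N => (j : ℕ) < k), d j) := by
  set S := ∑ j ∈ univ.filter (fun j : Fin N => (j : ℕ) < k), d j
  have hc : 0 < 4 * α * β := by positivity
  have hkpos : (0 : ℝ) < k := by exact_mod_cast hk
  have hcφ : 4 * α * β * φ = (4 * α * β + S) / k := by
    rw [hφ]; field_simp
  rw [hform, pos_max_neg_div_add_zero_iff hc, hcφ, lt_div_iff₀ hkpos] at hsk
  rw [hform, max_neg_div_add_zero_eq_zero_iff hc, hcφ, div_le_iff₀ hkpos] at hsk1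
  constructor
  · rw [show 1 / (2 * β) * ((k : ℝ) / 2 * d ⟨k - 1, by omega⟩ - 1 / 2 * S)
        = (d ⟨k - 1, by omega⟩ * k - S) / (4 * β) by field_simp; ring, div_lt_iff₀ (by positivity)]
    linarith
  · rw [show 1 / (2 * β) * ((k : ℝ) / 2 * d ⟨k, hkN⟩ - 1 / 2 * S)
        = (d ⟨k, hkN⟩ * k - S) / (4 * β) by field_simp; ring, le_div_iff₀ (by positivity)]
    linarith
end

section
/- Let L ∈ ℝ^{N×N} be symmetric positive semidefinite, partitioned into blocks L = [[L_ll, L_lu], [L_ul, L_uu]] according to a split N = l + u with 1 ≤ l < N, and suppose L_uu ∈ ℝ^{u×u} is invertible. Fix Y_l ∈ ℝ^{l×c}. Then the matrix F* = [Y_l; F*_u] with F*_u = −L_uu^{-1} L_ul Y_l is a global minimizer of Tr(Fᵀ L F) over all F ∈ ℝ^{N×c} whose first l rows equal Y_l; i.e., Tr((F*)ᵀ L F*) ≤ Tr(Fᵀ L F) for every F ∈ ℝ^{N×c} with F_l = Y_l. -/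
/-!
Write an admissible `F` as `F* + D`, where `D` vanishes on the labeled rows. The defining
equation `L_ul Y_l + L_uu F*_u = 0` says that `L F*` vanishes on the unlabeled rows, so the
cross term `Tr (Dᵀ L F*)` is zero and `Tr (Fᵀ L F) = Tr (F*ᵀ L F*) + Tr (Dᵀ L D)`, where the
last term is nonnegative because `L` is positive semidefinite.
-/

namespace Matrix

variable {m m₁ m₂ n p R : Type*}

theorem trace_transpose_add_mul_mul_add_of_isSymm [CommRing R] [Fintype m] [Fintype p]
    {L : Matrix m m R} (hL : L.IsSymm) (X D : Matrix m p R) :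
    ((X + D)ᵀ * L * (X + D)).trace =
      (Xᵀ * L * X).trace + 2 * (Dᵀ * L * X).trace + (Dᵀ * L * D).trace := by
  have hcross : (Xᵀ * L * D).trace = (Dᵀ * L * X).trace := by
    rw [← trace_transpose, transpose_mul, transpose_mul, transpose_transpose, hL.eq,
      Matrix.mul_assoc]
  simp only [transpose_add, Matrix.add_mul, Matrix.mul_add, trace_add, hcross]
  ring

theorem transpose_mul_eq_zero_of_toRows₁_eq_zero_of_toRows₂_eq_zero [Semiring R]
    [Fintype m₁] [Fintype m₂] {D : Matrix (m₁ ⊕ m₂) n R} {M : Matrix (m₁ ⊕ m₂) p R}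
    (hD : D.toRows₁ = 0) (hM : M.toRows₂ = 0) : Dᵀ * M = 0 := by
  rw [← fromRows_toRows D, ← fromRows_toRows M, hD, hM, transpose_fromRows,
    fromCols_mul_fromRows]
  simp

theorem PosSemidef.trace_transpose_mul_mul_le_of_toRows₂_mul_eq_zero [Fintype m₁] [Fintype m₂]
    [Fintype p] {L : Matrix (m₁ ⊕ m₂) (m₁ ⊕ m₂) ℝ} (hL : L.PosSemidef)
    {X F : Matrix (m₁ ⊕ m₂) p ℝ} (hX : (L * X).toRows₂ = 0) (hF : F.toRows₁ = X.toRows₁) :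
    (Xᵀ * L * X).trace ≤ (Fᵀ * L * F).trace := by
  have hD : (F - X).toRows₁ = 0 := by
    ext i j
    simpa [sub_eq_zero] using congrFun (congrFun hF i) j
  have hcross : ((F - X)ᵀ * L * X).trace = 0 := by
    rw [Matrix.mul_assoc, transpose_mul_eq_zero_of_toRows₁_eq_zero_of_toRows₂_eq_zero hD hX,
      trace_zero]
  have hsq : 0 ≤ ((F - X)ᵀ * L * (F - X)).trace := by
    simpa using (hL.conjTranspose_mul_mul_same (F - X)).trace_nonneg
  have hexpand := trace_transpose_add_mul_mul_add_of_isSymm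
    (isHermitian_iff_isSymm.mp hL.isHermitian) X (F - X)
  rw [add_sub_cancel, hcross] at hexpand
  linarith

theorem toRows₂_mul_fromRows_neg_inv_mul_eq_zero [CommRing R] [Fintype m₁] [Fintype m₂]
    [DecidableEq m₂] {L : Matrix (m₁ ⊕ m₂) (m₁ ⊕ m₂) R} (hL : IsUnit L.toBlocks₂₂)
    (Y : Matrix m₁ p R) :
    (L * fromRows Y (-(L.toBlocks₂₂⁻¹ * L.toBlocks₂₁ * Y))).toRows₂ = 0 := by
  have hinv : L.toBlocks₂₂ * L.toBlocks₂₂⁻¹ = 1 :=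
    mul_nonsing_inv _ ((isUnit_iff_isUnit_det _).mp hL)
  rw [← fromBlocks_toBlocks L, fromBlocks_mul_fromRows, toRows₂_fromRows]
  simp only [toBlocks_fromBlocks₂₁, toBlocks_fromBlocks₂₂, Matrix.mul_neg, ← Matrix.mul_assoc,
    hinv, Matrix.one_mul, add_neg_cancel]

end Matrix

open Matrix in
theorem label_propagation_update_is_global_minimizer_general
    (l u c : ℕ)
    (L : Matrix (Fin l ⊕ Fin u) (Fin l ⊕ Fin u) ℝ) (hL : L.PosSemidef)
    (hLuu : IsUnit L.toBlocks₂₂)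
    (Y : Matrix (Fin l) (Fin c) ℝ)
    (Fstar : Matrix (Fin l ⊕ Fin u) (Fin c) ℝ)
    (hFstar : Fstar = Matrix.fromRows Y (-(L.toBlocks₂₂⁻¹ * L.toBlocks₂₁ * Y))) :
    ∀ F : Matrix (Fin l ⊕ Fin u) (Fin c) ℝ,
      (∀ i j, F (Sum.inl i) j = Y i j) →
      (Fstarᵀ * L * Fstar).trace ≤ (Fᵀ * L * F).trace := by
  intro F hF
  subst hFstar
  refine hL.trace_transpose_mul_mul_le_of_toRows₂_mul_eq_zero
    (toRows₂_mul_fromRows_neg_inv_mul_eq_zero hLuu Y) ?_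
  ext i j
  simp [hF]

open Matrix in
/-- Let `L ∈ ℝ^{N×N}` (with `N = l + u`, indices `Fin l ⊕ Fin u`)
be symmetric positive semidefinite, with blocks `L_ll = L.toBlocks₁₁`,
`L_lu = L.toBlocks₁₂`, `L_ul = L.toBlocks₂₁`, `L_uu = L.toBlocks₂₂`, and suppose
`L_uu` is invertible. Fix `Y_l ∈ ℝ^{l×c}`. Then `F* = [Y_l; F*_u]` with
`F*_u = -L_uu⁻¹ L_ul Y_l` is a global minimizer of `Tr (Fᵀ L F)` over all
`F ∈ ℝ^{N×c}` whose labeled block (first `l` rows) equals `Y_l`. -/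
theorem label_propagation_update_is_global_minimizer
    (l u c : ℕ) (hl : 0 < l) (hu : 0 < u)
    (L : Matrix (Fin l ⊕ Fin u) (Fin l ⊕ Fin u) ℝ) (hL : L.PosSemidef)
    (hLuu : IsUnit L.toBlocks₂₂)
    (Y : Matrix (Fin l) (Fin c) ℝ)
    (Fstar : Matrix (Fin l ⊕ Fin u) (Fin c) ℝ)
    (hFstar : Fstar = Matrix.fromRows Y (-(L.toBlocks₂₂⁻¹ * L.toBlocks₂₁ * Y))) :
    ∀ F : Matrix (Fin l ⊕ Fin u) (Fin c) ℝ,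
      (∀ i j, F (Sum.inl i) j = Y i j) →
      (Fstarᵀ * L * Fstar).trace ≤ (Fᵀ * L * F).trace :=
  label_propagation_update_is_global_minimizer_general l u c L hL hLuu Y Fstar hFstar
end
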